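/- Let H be a discretely valued hyperfield whose absolute value takes some value other than 0 and 1 and whose norm ρ_H is positive (equivalently, H is not a field). Then for all x, y ∈ H: |x| ≤ |y| if and only if x + (−x) ⊆ y + (−y). -/
import Mathlib


/-- A (Krasner) valued hyperfield: a hyperfield with a multivalued addition,
single-valued multiplication, an absolute value, the induced distance `dist`,
and the norm `rho`. -/
structure ValuedHyperfield where
  carrier : Type
  add : carrier → carrier → Set carrier
  mul : carrier → carrier → carrier
  zero : carrier
  one : carrier
  neg : carrier → carrier
  abs : carrier → ℝ
  dist : carrier → carrier → ℝ
  rho : ℝ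
  add_comm : ∀ x y, add x y = add y x
  add_assoc : ∀ x y z, (⋃ t ∈ add x y, add t z) = ⋃ t ∈ add y z, add x t
  add_zero : ∀ x, add x zero = {x}
  neg_mem : ∀ x, zero ∈ add x (neg x)
  neg_unique : ∀ x y, zero ∈ add x y → y = neg x
  reverse : ∀ x y z, x ∈ add y (neg z) ↔ y ∈ add x z
  mul_comm : ∀ x y, mul x y = mul y x
  mul_assoc : ∀ x y z, mul (mul x y) z = mul x (mul y z)
  mul_one : ∀ x, mul x one = x
  one_ne_zero : one ≠ zero
  mul_inv : ∀ x, x ≠ zero → ∃ y, mul x y = one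
  distrib : ∀ x y z, (fun t => mul t z) '' add x y ⊆ add (mul x z) (mul y z)
  abs_nonneg : ∀ x, 0 ≤ abs x
  abs_eq_zero_iff : ∀ x, abs x = 0 ↔ x = zero
  abs_mul : ∀ x y, abs (mul x y) = abs x * abs y
  abs_add_le : ∀ x y z, z ∈ add x y → abs z ≤ max (abs x) (abs y)
  abs_add_unique : ∀ x y, zero ∉ add x y →
    ∀ z w, z ∈ add x y → w ∈ add x y → abs z = abs w
  dist_self : ∀ x, dist x x = 0
  dist_eq : ∀ x y z, x ≠ y → z ∈ add x (neg y) → dist x y = abs z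
  rho_nonneg : 0 ≤ rho
  rho_ball : ∀ x y, (∃ w, add x y = {z | dist z w ≤ rho * max (abs x) (abs y)}) ∨
      (∃ w, add x y = {z | dist z w < rho * max (abs x) (abs y)})
  rho_min : ∀ r : ℝ, 0 ≤ r →
      (∀ x y, (∃ w, add x y = {z | dist z w ≤ r * max (abs x) (abs y)}) ∨
        (∃ w, add x y = {z | dist z w < r * max (abs x) (abs y)})) → rho ≤ r

/-- The valuation is discrete: every nonzero value of the absolute value is an
isolated point of the image of the absolute value. -/
def ValuedHyperfield.Discrete (V : ValuedHyperfield) : Prop :=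
  ∀ r ∈ Set.range V.abs, r ≠ 0 →
    ∃ ε > (0 : ℝ), ∀ s ∈ Set.range V.abs, |s - r| < ε → s = r

/-- `θ` is the largest absolute value which is strictly less than 1, attained
at some nonzero element. -/
def ValuedHyperfield.IsTheta (V : ValuedHyperfield) (θ : ℝ) : Prop :=
  (∃ x, x ≠ V.zero ∧ V.abs x = θ) ∧ θ < 1 ∧
    ∀ x, x ≠ V.zero → V.abs x < 1 → V.abs x ≤ θ

namespace ValuedHyperfield

variable (V : ValuedHyperfield)

lemma abs_zero : V.abs V.zero = 0 := (V.abs_eq_zero_iff V.zero).2 rfl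

lemma abs_one : V.abs V.one = 1 := by
  have h := V.abs_mul V.one V.one
  rw [V.mul_one] at h
  have h0 : V.abs V.one ≠ 0 := fun h' => V.one_ne_zero ((V.abs_eq_zero_iff _).1 h')
  have h1 : V.abs V.one * 1 = V.abs V.one * V.abs V.one := by rw [_root_.mul_one]; exact h
  exact (mul_left_cancel₀ h0 h1).symm

lemma mul_zero' (x : V.carrier) : V.mul V.zero x = V.zero := by
  rw [← V.abs_eq_zero_iff, V.abs_mul, V.abs_zero, zero_mul]

lemma zero_add' (x : V.carrier) : V.add V.zero x = {x} := by
  rw [V.add_comm]; exact V.add_zero x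

lemma neg_zero' : V.neg V.zero = V.zero :=
  (V.neg_unique V.zero V.zero (by rw [V.add_zero]; rfl)).symm

lemma one_mul' (x : V.carrier) : V.mul V.one x = x := by
  rw [V.mul_comm]; exact V.mul_one x

lemma neg_eq_mul (x : V.carrier) : V.neg x = V.mul (V.neg V.one) x := by
  have h0 : V.zero ∈ V.add V.one (V.neg V.one) := V.neg_mem V.one
  have h2 := V.distrib V.one (V.neg V.one) x ⟨V.zero, h0, rfl⟩
  simp only [V.mul_zero', V.one_mul'] at h2
  exact (V.neg_unique x _ h2).symm

lemma neg_neg' (x : V.carrier) : V.neg (V.neg x) = x := by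
  have h : V.zero ∈ V.add (V.neg x) x := by rw [V.add_comm]; exact V.neg_mem x
  exact (V.neg_unique (V.neg x) x h).symm

lemma abs_neg_one : V.abs (V.neg V.one) = 1 := by
  have h : V.one = V.mul (V.neg V.one) (V.neg V.one) := by
    have h1 := V.neg_eq_mul (V.neg V.one)
    rw [V.neg_neg'] at h1
    exact h1
  have h2 := congrArg V.abs h
  rw [V.abs_one, V.abs_mul] at h2
  rcases mul_self_eq_one_iff.1 h2.symm with h3 | h3
  · exact h3
  · have := V.abs_nonneg (V.neg V.one); linarith

lemma abs_neg' (x : V.carrier) : V.abs (V.neg x) = V.abs x := by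
  rw [V.neg_eq_mul, V.abs_mul, V.abs_neg_one, one_mul]

lemma add_nonempty (x y : V.carrier) : (V.add x y).Nonempty := by
  have h := V.add_assoc x y (V.neg y)
  have hx : x ∈ ⋃ t ∈ V.add y (V.neg y), V.add x t := by
    refine Set.mem_biUnion (V.neg_mem y) ?_
    rw [V.add_zero]; rfl
  rw [← h] at hx
  rcases Set.mem_iUnion₂.1 hx with ⟨t, ht, _⟩
  exact ⟨t, ht⟩

lemma dist_le_max (z w : V.carrier) : V.dist z w ≤ max (V.abs z) (V.abs w) := by
  by_cases h : z = w
  · subst h; rw [V.dist_self]; exact le_max_of_le_left (V.abs_nonneg z)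
  · obtain ⟨u, hu⟩ := V.add_nonempty z (V.neg w)
    rw [V.dist_eq z w u h hu]
    have h1 := V.abs_add_le z (V.neg w) u hu
    rwa [V.abs_neg'] at h1

lemma abs_le_max_dist (z w : V.carrier) : V.abs z ≤ max (V.dist z w) (V.abs w) := by
  by_cases h : z = w
  · subst h; exact le_max_of_le_right (le_refl _)
  · obtain ⟨u, hu⟩ := V.add_nonempty z (V.neg w)
    rw [V.dist_eq z w u h hu]
    exact V.abs_add_le u w z ((V.reverse u z w).1 hu)

lemma dist_zero' (w : V.carrier) : V.dist V.zero w = V.abs w := by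
  by_cases h : w = V.zero
  · subst h; rw [V.dist_self, V.abs_zero]
  · have hm : V.neg w ∈ V.add V.zero (V.neg w) := by rw [V.zero_add']; rfl
    rw [V.dist_eq V.zero w (V.neg w) (Ne.symm h) hm, V.abs_neg']

lemma S1_char : V.add V.one (V.neg V.one) = {z | V.abs z ≤ V.rho}
    ∨ V.add V.one (V.neg V.one) = {z | V.abs z < V.rho} := by
  have hmax : V.rho * max (V.abs V.one) (V.abs (V.neg V.one)) = V.rho := by
    rw [V.abs_one, V.abs_neg_one, max_self, _root_.mul_one]
  rcases V.rho_ball V.one (V.neg V.one) with ⟨w, hw⟩ | ⟨w, hw⟩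
  · left
    rw [hmax] at hw
    have h0 : V.zero ∈ V.add V.one (V.neg V.one) := V.neg_mem V.one
    rw [hw] at h0
    have hww : V.abs w ≤ V.rho := by
      have := h0
      rw [Set.mem_setOf_eq, V.dist_zero'] at this
      exact this
    ext z
    rw [hw]
    constructor
    · intro hz
      rw [Set.mem_setOf_eq] at hz ⊢
      exact le_trans (V.abs_le_max_dist z w) (max_le hz hww)
    · intro hz
      rw [Set.mem_setOf_eq] at hz ⊢
      exact le_trans (V.dist_le_max z w) (max_le hz hww)
  · right
    rw [hmax] at hw
    have h0 : V.zero ∈ V.add V.one (V.neg V.one) := V.neg_mem V.one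
    rw [hw] at h0
    have hww : V.abs w < V.rho := by
      have := h0
      rw [Set.mem_setOf_eq, V.dist_zero'] at this
      exact this
    ext z
    rw [hw]
    constructor
    · intro hz
      rw [Set.mem_setOf_eq] at hz ⊢
      exact lt_of_le_of_lt (V.abs_le_max_dist z w) (max_lt hz hww)
    · intro hz
      rw [Set.mem_setOf_eq] at hz ⊢
      exact lt_of_le_of_lt (V.dist_le_max z w) (max_lt hz hww)

lemma smul_mem (x t : V.carrier) (ht : t ∈ V.add V.one (V.neg V.one)) :
    V.mul t x ∈ V.add x (V.neg x) := by
  have h := V.distrib V.one (V.neg V.one) x ⟨t, ht, rfl⟩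
  rwa [V.one_mul', ← V.neg_eq_mul] at h

lemma mem_smul {x : V.carrier} (hx : x ≠ V.zero) {z : V.carrier}
    (hz : z ∈ V.add x (V.neg x)) :
    ∃ t ∈ V.add V.one (V.neg V.one), z = V.mul t x := by
  obtain ⟨x', hx'⟩ := V.mul_inv x hx
  have h1 : V.mul z x' ∈ V.add (V.mul x x') (V.mul (V.neg x) x') :=
    V.distrib x (V.neg x) x' ⟨z, hz, rfl⟩
  have h2 : V.mul (V.neg x) x' = V.neg V.one := by
    rw [V.neg_eq_mul x, V.mul_assoc, hx', V.mul_one]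
  rw [hx', h2] at h1
  refine ⟨V.mul z x', h1, ?_⟩
  rw [V.mul_assoc, V.mul_comm x' x, hx', V.mul_one]

end ValuedHyperfield

def ValuedHyperfield.pow (V : ValuedHyperfield) (e : V.carrier) : ℕ → V.carrier
  | 0 => V.one
  | n + 1 => V.mul e (ValuedHyperfield.pow V e n)

namespace ValuedHyperfield

variable (V : ValuedHyperfield)

lemma abs_pow (e : V.carrier) (n : ℕ) : V.abs (V.pow e n) = (V.abs e) ^ n := by
  induction n with
  | zero => exact V.abs_one
  | succ n ih =>
    rw [show V.pow e (n + 1) = V.mul e (V.pow e n) from rfl, V.abs_mul, ih,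
      _root_.pow_succ, _root_.mul_comm]

lemma exists_abs_lt_one (hval : ∃ x : V.carrier, V.abs x ≠ 0 ∧ V.abs x ≠ 1) :
    ∃ e : V.carrier, e ≠ V.zero ∧ 0 < V.abs e ∧ V.abs e < 1 := by
  obtain ⟨x, h0, h1⟩ := hval
  have hx : x ≠ V.zero := fun h => h0 (by rw [h, V.abs_zero])
  rcases lt_or_gt_of_ne h1 with h | h
  · exact ⟨x, hx, lt_of_le_of_ne (V.abs_nonneg x) (Ne.symm h0), h⟩
  · obtain ⟨y, hy⟩ := V.mul_inv x hx
    have hxy : V.abs x * V.abs y = 1 := by rw [← V.abs_mul, hy, V.abs_one]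
    have hy0 : 0 < V.abs y := by
      rcases lt_or_eq_of_le (V.abs_nonneg y) with h' | h'
      · exact h'
      · rw [← h', mul_zero] at hxy; norm_num at hxy
    have hy1 : V.abs y < 1 := by nlinarith
    exact ⟨y, fun hz => by rw [hz, V.abs_zero] at hy0; exact lt_irrefl 0 hy0, hy0, hy1⟩

lemma exists_max_val (hdisc : V.Discrete) (A : Set ℝ) (hA : A.Nonempty)
    (hbdd : BddAbove A) (hpos : ∀ a ∈ A, 0 < a)
    (hsub : ∀ a ∈ A, ∀ b ∈ A, b / a ∈ Set.range V.abs) :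
    ∃ μ ∈ A, ∀ a ∈ A, a ≤ μ := by
  obtain ⟨ε, hε, hiso⟩ := hdisc 1 ⟨V.one, V.abs_one⟩ (by norm_num : (1:ℝ) ≠ 0)
  obtain ⟨a0, ha0⟩ := hA
  set s := sSup A with hs_def
  have hs : 0 < s := lt_of_lt_of_le (hpos a0 ha0) (le_csSup hbdd ha0)
  have h1 : s / (1 + ε) < s := by
    rw [div_lt_iff₀ (by linarith)]; nlinarith
  obtain ⟨a, haA, ha⟩ := exists_lt_of_lt_csSup ⟨a0, ha0⟩ h1
  refine ⟨a, haA, fun b hbA => ?_⟩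
  by_contra hab
  push_neg at hab
  have hb_le : b ≤ s := le_csSup hbdd hbA
  have hrange := hsub a haA b hbA
  have ha_pos := hpos a haA
  have hv1 : 1 < b / a := (one_lt_div ha_pos).2 hab
  have hv2 : b / a < 1 + ε := by
    rw [div_lt_iff₀ ha_pos]
    rw [div_lt_iff₀ (by linarith : (0:ℝ) < 1 + ε)] at ha
    calc b ≤ s := hb_le
    _ < a * (1 + ε) := ha
    _ = (1 + ε) * a := by ring
  have heq := hiso (b / a) hrange (by rw [abs_sub_lt_iff]; constructor <;> linarith)
  have : b = a := by
    field_simp at heq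
    exact heq
  linarith

end ValuedHyperfield

theorem stmt11 (V : ValuedHyperfield) (hdisc : V.Discrete)
    (hval : ∃ x : V.carrier, V.abs x ≠ 0 ∧ V.abs x ≠ 1)
    (hρ : 0 < V.rho) :
    ∀ x y : V.carrier,
      V.abs x ≤ V.abs y ↔ V.add x (V.neg x) ⊆ V.add y (V.neg y) := by
  classical
  obtain ⟨e, he0, hepos, helt⟩ := V.exists_abs_lt_one hval
  obtain ⟨n, hn⟩ := exists_pow_lt_of_lt_one hρ helt
  set z0 := V.pow e n with hz0_def
  have hz0abs : V.abs z0 = (V.abs e) ^ n := V.abs_pow e n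
  have hz0pos : 0 < V.abs z0 := by rw [hz0abs]; exact pow_pos hepos n
  have hz0ne : z0 ≠ V.zero := fun h => by
    rw [h, V.abs_zero] at hz0pos; exact lt_irrefl 0 hz0pos
  have hz0mem : z0 ∈ V.add V.one (V.neg V.one) := by
    rcases V.S1_char with h | h <;> rw [h, Set.mem_setOf_eq] <;> rw [hz0abs]
    · exact le_of_lt hn
    · exact hn
  -- the set of absolute values of nonzero elements of S1, and its max
  set A := V.abs '' {z | z ∈ V.add V.one (V.neg V.one) ∧ z ≠ V.zero} with hA_def
  have hAne : A.Nonempty := ⟨V.abs z0, ⟨z0, ⟨hz0mem, hz0ne⟩, rfl⟩⟩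
  have hAbdd : BddAbove A := by
    refine ⟨1, fun a ha => ?_⟩
    obtain ⟨z, ⟨hz, _⟩, hza⟩ := ha
    rw [← hza]
    have h1 := V.abs_add_le V.one (V.neg V.one) z hz
    rwa [V.abs_one, V.abs_neg_one, max_self] at h1
  have hApos : ∀ a ∈ A, 0 < a := by
    intro a ha
    obtain ⟨z, ⟨_, hzne⟩, hza⟩ := ha
    rw [← hza]
    exact lt_of_le_of_ne (V.abs_nonneg z)
      (fun h => hzne ((V.abs_eq_zero_iff z).1 h.symm))
  have hAsub : ∀ a ∈ A, ∀ b ∈ A, b / a ∈ Set.range V.abs := by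
    intro a ha b hb
    obtain ⟨za, ⟨_, hzane⟩, hzaa⟩ := ha
    obtain ⟨zb, ⟨_, _⟩, hzbb⟩ := hb
    obtain ⟨za', hza'⟩ := V.mul_inv za hzane
    have hinv : V.abs za * V.abs za' = 1 := by rw [← V.abs_mul, hza', V.abs_one]
    have hapos : 0 < V.abs za := lt_of_le_of_ne (V.abs_nonneg za)
      (fun h => hzane ((V.abs_eq_zero_iff za).1 h.symm))
    refine ⟨V.mul zb za', ?_⟩
    rw [V.abs_mul, ← hzaa, ← hzbb, eq_div_iff (ne_of_gt hapos), mul_assoc,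
      mul_comm (V.abs za') (V.abs za), hinv, mul_one]
  obtain ⟨μ, hμA, hμmax⟩ := V.exists_max_val hdisc A hAne hAbdd hApos hAsub
  obtain ⟨t0, ⟨ht0S, ht0ne⟩, ht0abs⟩ := hμA
  have hμpos : 0 < μ := hApos μ ⟨t0, ⟨ht0S, ht0ne⟩, ht0abs⟩
  intro x y
  constructor
  · -- forward
    intro hxy z hz
    by_cases hx : x = V.zero
    · rw [hx, V.neg_zero', V.add_zero, Set.mem_singleton_iff] at hz
      rw [hz]
      exact V.neg_mem y
    · have hy : y ≠ V.zero := by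
        intro h
        rw [h, V.abs_zero] at hxy
        exact hx ((V.abs_eq_zero_iff x).1 (le_antisymm hxy (V.abs_nonneg x)))
      obtain ⟨t, htS, htz⟩ := V.mem_smul hx hz
      obtain ⟨y', hy'⟩ := V.mul_inv y hy
      have hsy : V.mul (V.mul t (V.mul x y')) y = z := by
        rw [V.mul_assoc t (V.mul x y') y, V.mul_assoc x y' y, V.mul_comm y' y,
          hy', V.mul_one]
        exact htz.symm
      have hyinv : V.abs y * V.abs y' = 1 := by rw [← V.abs_mul, hy', V.abs_one]
      have hy'nn := V.abs_nonneg y'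
      have hsabs : V.abs (V.mul t (V.mul x y')) ≤ V.abs t := by
        rw [V.abs_mul, V.abs_mul]
        have h1 : V.abs x * V.abs y' ≤ 1 := by nlinarith
        nlinarith [V.abs_nonneg t]
      have hsS : V.mul t (V.mul x y') ∈ V.add V.one (V.neg V.one) := by
        rcases V.S1_char with h | h <;> rw [h, Set.mem_setOf_eq] at htS ⊢
        · exact le_trans hsabs htS
        · exact lt_of_le_of_lt hsabs htS
      rw [← hsy]
      exact V.smul_mem y _ hsS
  · -- backward
    intro hsub2
    by_cases hx : x = V.zero
    · rw [hx, V.abs_zero]; exact V.abs_nonneg y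
    · have hxpos : 0 < V.abs x := lt_of_le_of_ne (V.abs_nonneg x)
        (fun h => hx ((V.abs_eq_zero_iff x).1 h.symm))
      have h1 : V.mul t0 x ∈ V.add y (V.neg y) := hsub2 (V.smul_mem x t0 ht0S)
      have hy : y ≠ V.zero := by
        intro h
        rw [h, V.neg_zero', V.add_zero, Set.mem_singleton_iff] at h1
        have h2 : V.abs (V.mul t0 x) = 0 := by rw [h1, V.abs_zero]
        rw [V.abs_mul, ht0abs] at h2
        nlinarith
      obtain ⟨u, huS, hu⟩ := V.mem_smul hy h1
      have h2 : V.abs (V.mul t0 x) = V.abs u * V.abs y := by rw [hu, V.abs_mul]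
      rw [V.abs_mul, ht0abs] at h2
      have hune : u ≠ V.zero := by
        intro h
        rw [h, V.abs_zero, zero_mul] at h2
        nlinarith
      have h3 : V.abs u ≤ μ := hμmax _ ⟨u, ⟨huS, hune⟩, rfl⟩
      nlinarith [V.abs_nonneg y, mul_nonneg (sub_nonneg.2 h3) (V.abs_nonneg y)]
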